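/- arXiv:hep-th/0412226 — 3 statements merged into one kernel-verified Lean document; each statement's English description precedes it below -/
import Mathlib

section
/- Let H be a Hilbert space, A a bounded operator on H, and Ω a unit vector with AΩ ≠ 0. Let P be the spectral measure of a (possibly unbounded) self-adjoint operator M ≥ 0 on H, let m > 0, and suppose (regularity condition A'): for every δ ≥ 0, ‖P([m²−δ, m²+δ])(1−P({m²}))AΩ‖ ≤ c δ^ε for some c, ε > 0. Let g_T : ℝ → ℂ be measurable with |g_T(λ)| ≤ C s(T)^{-1} for all λ and g_T supported in {λ : |λ − m²| ≤ K/s(T)} ∪ {m²}, g_T(m²)=0, where s(T)=T^ν, ν∈(0,1). Then ‖g_T(M)AΩ‖ ≤ c' s(T)^{-(1+ε)} for a constant c' independent of T. -/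
open MeasureTheory

/-! Write `s = T^ν`. The window `S = [m² - K/s, m² + K/s] \ {m²}` carries the support of `g_T`
because `g_T(m²) = 0`, and the regularity condition gives
`μ S ≤ (c (K/s)^ε)²`, while `|g_T|² ≤ (C/s)²`.
Hence `‖g_T(M) AΩ‖² = ∫ |g_T|² dμ ≤ (C/s)² (c (K/s)^ε)²`, i.e. `‖g_T(M) AΩ‖ ≤ |C c| K^ε / s^(1+ε)`. -/

theorem integral_norm_sq_le_of_support_subset {α E : Type*} [MeasurableSpace α]
    [NormedAddCommGroup E] {μ : Measure α} {f : α → E} {s : Set α} {a : ℝ} (hs : μ s < ⊤)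
    (hsupp : Function.support f ⊆ s) (hf : ∀ x, ‖f x‖ ≤ a) :
    ∫ x, ‖f x‖ ^ 2 ∂μ ≤ a ^ 2 * μ.real s := by
  have hzero : ∀ x, x ∉ s → ‖f x‖ ^ 2 = 0 := fun x hx => by
    rw [Function.notMem_support.mp (mt (@hsupp x) hx), norm_zero, sq, zero_mul]
  rw [← setIntegral_eq_integral_of_forall_compl_eq_zero hzero]
  refine le_trans (Real.le_norm_self _) (norm_setIntegral_le_of_norm_le_const hs fun x _ => ?_)
  rw [Real.norm_of_nonneg (sq_nonneg _)]
  exact pow_le_pow_left₀ (norm_nonneg _) (hf x) 2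

theorem support_subset_Icc_diff_singleton {E : Type*} [Zero E] {f : ℝ → E} {x r : ℝ}
    (hx : f x = 0) (hf : ∀ l, f l ≠ 0 → |l - x| ≤ r ∨ l = x) :
    Function.support f ⊆ Set.Icc (x - r) (x + r) \ {x} := by
  intro l hl
  have hlx : l ≠ x := fun h => hl (h ▸ hx)
  obtain hdist | rfl := hf l hl
  · exact ⟨⟨by linarith [neg_abs_le (l - x)], by linarith [le_abs_self (l - x)]⟩, hlx⟩
  · exact absurd rfl hlx

theorem le_abs_mul_of_sq_le_measureReal_mul {α : Type*} [MeasurableSpace α] {μ : Measure α}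
    {s : Set α} {x a b : ℝ} (hμ : μ s ≤ ENNReal.ofReal (b ^ 2))
    (h : x ^ 2 ≤ a ^ 2 * μ.real s) : x ≤ |a * b| := by
  have hμb : μ.real s ≤ b ^ 2 := ENNReal.toReal_le_of_le_ofReal (sq_nonneg _) hμ
  have hsq : x ^ 2 ≤ (a * b) ^ 2 := by
    rw [mul_pow]; exact h.trans (mul_le_mul_of_nonneg_left hμb (sq_nonneg _))
  exact (le_abs_self x).trans (sq_le_sq.mp hsq)

theorem stmt_4_general (μ : Measure ℝ) (m c ε C K ν : ℝ) (hK : 0 < K)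
    (hreg : ∀ δ : ℝ, 0 ≤ δ →
      μ (Set.Icc (m ^ 2 - δ) (m ^ 2 + δ) \ {m ^ 2}) ≤ ENNReal.ofReal ((c * δ ^ ε) ^ 2))
    (g : ℝ → ℝ → ℂ)
    (hgb : ∀ T : ℝ, 1 ≤ T → ∀ l : ℝ, ‖g T l‖ ≤ C / T ^ ν)
    (hgs : ∀ T : ℝ, 1 ≤ T → ∀ l : ℝ, g T l ≠ 0 → |l - m ^ 2| ≤ K / T ^ ν ∨ l = m ^ 2)
    (hg0 : ∀ T : ℝ, g T (m ^ 2) = 0)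
    (nrm : ℝ → ℝ)
    (hn : ∀ T : ℝ, 1 ≤ T → 0 ≤ nrm T ∧ (nrm T) ^ 2 = ∫ l : ℝ, ‖g T l‖ ^ 2 ∂μ) :
    ∃ c' : ℝ, ∀ T : ℝ, 1 ≤ T → nrm T ≤ c' / (T ^ ν) ^ (1 + ε) := by
  refine ⟨|C * c| * K ^ ε, fun T hT => ?_⟩
  have ht : 0 < T ^ ν := Real.rpow_pos_of_pos (zero_lt_one.trans_le hT) ν
  set t := T ^ ν
  have hnrm := (hn T hT).2
  have hμS := hreg (K / t) (div_pos hK ht).le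
  have hbound := integral_norm_sq_le_of_support_subset (hμS.trans_lt ENNReal.ofReal_lt_top)
    (support_subset_Icc_diff_singleton (hg0 T) (hgs T hT)) (hgb T hT)
  have hscale : C / t * (c * (K / t) ^ ε) = C * c * K ^ ε / t ^ (1 + ε) := by
    rw [Real.div_rpow hK.le ht.le, Real.rpow_add ht, Real.rpow_one]
    field_simp
  calc nrm T ≤ |C / t * (c * (K / t) ^ ε)| :=
        le_abs_mul_of_sq_le_measureReal_mul hμS (hnrm ▸ hbound)
    _ = |C * c| * K ^ ε / t ^ (1 + ε) := by
      rw [hscale, abs_div, abs_mul _ (K ^ ε), abs_of_pos (Real.rpow_pos_of_pos hK ε),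
        abs_of_pos (Real.rpow_pos_of_pos ht _)]

/-- Abstract spectral form of Herbst's estimate: `μ` is the scalar spectral
measure of the vector `AΩ` for the mass-squared operator `M`; the regularity
condition A' reads `μ([m²-δ, m²+δ] \ {m²}) ≤ (c δ^ε)²`.  If `g_T` is a spectral
multiplier of height `≤ C/s(T)`, supported in a window of width `K/s(T)` around
`m²` (up to the point `m²` itself, where it vanishes), and `nrm T = ‖g_T(M)AΩ‖`
is given by `(nrm T)² = ∫ |g_T|² dμ`, then `nrm T ≤ c' s(T)^{-(1+ε)}`. -/
theorem stmt_4 (μ : Measure ℝ) (m c ε C K ν : ℝ) (hm : 0 < m) (hc : 0 < c)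
    (hε : 0 < ε) (hC : 0 ≤ C) (hK : 0 < K) (hν₀ : 0 < ν) (hν₁ : ν < 1)
    (hreg : ∀ δ : ℝ, 0 ≤ δ →
      μ (Set.Icc (m ^ 2 - δ) (m ^ 2 + δ) \ {m ^ 2}) ≤ ENNReal.ofReal ((c * δ ^ ε) ^ 2))
    (g : ℝ → ℝ → ℂ)
    (hgb : ∀ T : ℝ, 1 ≤ T → ∀ l : ℝ, ‖g T l‖ ≤ C / T ^ ν)
    (hgs : ∀ T : ℝ, 1 ≤ T → ∀ l : ℝ, g T l ≠ 0 → |l - m ^ 2| ≤ K / T ^ ν ∨ l = m ^ 2)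
    (hg0 : ∀ T : ℝ, g T (m ^ 2) = 0)
    (nrm : ℝ → ℝ)
    (hn : ∀ T : ℝ, 1 ≤ T → 0 ≤ nrm T ∧ (nrm T) ^ 2 = ∫ l : ℝ, ‖g T l‖ ^ 2 ∂μ) :
    ∃ c' : ℝ, ∀ T : ℝ, 1 ≤ T → nrm T ≤ c' / (T ^ ν) ^ (1 + ε) :=
  stmt_4_general μ m c ε C K ν hK hreg g hgb hgs hg0 nrm hn
end

section
/- Let H be a Hilbert space and for each T ≥ 1 let A₁(T), …, Aₙ(T) be bounded operators and Ω a fixed unit vector. Suppose: (i) ‖Aᵢ(T)‖ ≤ c T^{3/2} for all i; (ii) each Aᵢ(T) is differentiable in T (in norm on vectors of compact spectral support) and for all i<j and every N ∈ ℕ, ‖[ (d/dT)Aᵢ(T), Aⱼ(T) ]‖ ≤ c_N T^{-N}; (iii) there is a fixed projection E with ‖A_{i₁}(T)⋯A_{i_k}(T) E‖ ≤ c uniformly in T for any subfamily, with E (d/dT)A_k(T)Ω = (d/dT)A_k(T)Ω; (iv) ‖(d/dT)A_k(T)Ω‖ ≤ c T^{-μ} with μ > 1. Then T ↦ A₁(T)⋯Aₙ(T)Ω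 converges strongly as T → ∞. -/
open MeasureTheory Filter

noncomputable section CookAux
variable {H : Type*} [NormedAddCommGroup H] [InnerProductSpace ℂ H] [CompleteSpace H]

/-- Recursive form of the derivative of a product of operator families. -/
def Dlist {n : ℕ} (A A' : Fin n → ℝ → H →L[ℂ] H) : List (Fin n) → ℝ → (H →L[ℂ] H)
  | [], _ => 0
  | i :: l, T => A' i T * ((l.map fun j => A j T).prod) + A i T * Dlist A A' l T

theorem Dlist_congr {n} (A B B' : Fin n → ℝ → H →L[ℂ] H) (T : ℝ)
    (h : ∀ i, B i T = B' i T) :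
    ∀ l : List (Fin n), Dlist A B l T = Dlist A B' l T
  | [] => rfl
  | i :: l => by rw [Dlist, Dlist, h i, Dlist_congr A B B' T h l]

theorem listprod_hasDerivAt {n} (A A' : Fin n → ℝ → H →L[ℂ] H) (T : ℝ)
    (hd : ∀ i : Fin n, HasDerivAt (fun s => A i s) (A' i T) T) :
    ∀ l : List (Fin n), HasDerivAt (fun s => (l.map fun j => A j s).prod) (Dlist A A' l T) T
  | [] => by simpa [Dlist] using hasDerivAt_const T (1 : H →L[ℂ] H)
  | i :: l => by
    have := (hd i).mul (listprod_hasDerivAt A A' T hd l)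
    rw [Dlist]
    exact this

theorem mapprod_aesm {n} (A : Fin n → ℝ → H →L[ℂ] H) (μ : Measure ℝ)
    (hA : ∀ i, AEStronglyMeasurable (fun T => A i T) μ) :
    ∀ l : List (Fin n), AEStronglyMeasurable (fun T => (l.map fun j => A j T).prod) μ
  | [] => by simpa using aestronglyMeasurable_const (b := (1 : H →L[ℂ] H))
  | i :: l => by
    simp only [List.map_cons, List.prod_cons]
    exact (hA i).mul (mapprod_aesm A μ hA l)

theorem Dlist_aesm {n} (A B : Fin n → ℝ → H →L[ℂ] H) (μ : Measure ℝ)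
    (hA : ∀ i, AEStronglyMeasurable (fun T => A i T) μ)
    (hB : ∀ i, AEStronglyMeasurable (fun T => B i T) μ) :
    ∀ l : List (Fin n), AEStronglyMeasurable (fun T => Dlist A B l T) μ
  | [] => by simpa [Dlist] using aestronglyMeasurable_const (b := (0 : H →L[ℂ] H))
  | i :: l => by
    simp only [Dlist]
    exact ((hB i).mul (mapprod_aesm A μ hA l)).add ((hA i).mul (Dlist_aesm A B μ hA hB l))

theorem map_prod_norm_le {n} (A : Fin n → ℝ → H →L[ℂ] H) (b T : ℝ) (hb : 0 ≤ b)
    (hA : ∀ i, ‖A i T‖ ≤ b) :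
    ∀ l : List (Fin n), ‖(l.map fun j => A j T).prod‖ ≤ b ^ l.length
  | [] => by
    simp only [List.map_nil, List.prod_nil, List.length_nil, pow_zero]
    exact ContinuousLinearMap.norm_id_le
  | i :: l => by
    simp only [List.map_cons, List.prod_cons, List.length_cons, pow_succ']
    calc ‖A i T * (l.map fun j => A j T).prod‖ ≤ ‖A i T‖ * ‖(l.map fun j => A j T).prod‖ :=
          norm_mul_le _ _
      _ ≤ b * b ^ l.length := by
          apply mul_le_mul (hA i) (map_prod_norm_le A b T hb hA l) (norm_nonneg _) hb


theorem lemB {n} (A A' : Fin n → ℝ → H →L[ℂ] H) (Ω : H) (hΩ : ‖Ω‖ = 1)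
    (E : H →L[ℂ] H) (c1 cE CC μ : ℝ) (hc1 : 1 ≤ c1) (hCC : 0 ≤ CC)
    (k : Fin n) (T : ℝ) (hT : 1 ≤ T)
    (hA : ∀ i : Fin n, ‖A i T‖ ≤ c1 * T ^ ((3:ℝ)/2))
    (hprod : ∀ l : List (Fin n), ‖(l.map fun i => A i T).prod * E‖ ≤ cE)
    (hEfix : E ((A' k T) Ω) = (A' k T) Ω)
    (hdΩ : ‖(A' k T) Ω‖ ≤ c1 * T ^ (-μ))
    (hcommT : ∀ j : Fin n, k < j →
      ‖A' k T * A j T - A j T * A' k T‖ ≤ CC * T ^ (-(2*(n:ℝ)+2))) :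
    ∀ (q p : List (Fin n)), (∀ j ∈ q, k < j) → p.length + q.length < n →
      ‖(((p.map fun i => A i T).prod) * A' k T * ((q.map fun i => A i T).prod)) Ω‖
        ≤ cE * (c1 * T ^ (-μ)) + q.length * (c1 ^ n * CC * T ^ (-(2:ℝ)))
  | [], p, hq, hlen => by
    have hT0 : (0:ℝ) < T := lt_of_lt_of_le one_pos hT
    have h1 : (((p.map fun i => A i T).prod) * A' k T * 1) Ω
        = ((p.map fun i => A i T).prod * E) ((A' k T) Ω) := by
      rw [mul_one]
      simp only [ContinuousLinearMap.mul_apply]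
      rw [hEfix]
    simp only [List.map_nil, List.prod_nil, h1, List.length_nil, Nat.cast_zero, zero_mul, add_zero]
    calc ‖((p.map fun i => A i T).prod * E) ((A' k T) Ω)‖
        ≤ ‖(p.map fun i => A i T).prod * E‖ * ‖(A' k T) Ω‖ :=
          ContinuousLinearMap.le_opNorm _ _
      _ ≤ cE * (c1 * T ^ (-μ)) := by
          apply mul_le_mul (hprod p) hdΩ (norm_nonneg _)
          exact le_trans (norm_nonneg _) (hprod p)
  | j :: q', p, hq, hlen => by
    have hT0 : (0:ℝ) < T := lt_of_lt_of_le one_pos hT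
    have hc10 : (0:ℝ) ≤ c1 := le_trans zero_le_one hc1
    set P := (p.map fun i => A i T).prod with hP
    set Q' := (q'.map fun i => A i T).prod with hQ'
    set C := A' k T * A j T - A j T * A' k T with hC
    have hsplit : P * A' k T * ((A j T) * Q')
        = ((p ++ [j]).map fun i => A i T).prod * A' k T * Q' + P * C * Q' := by
      simp only [List.map_append, List.prod_append, List.map_cons, List.prod_cons,
        List.map_nil, List.prod_nil, mul_one, hC]
      noncomm_ring
    simp only [List.map_cons, List.prod_cons]
    rw [← hQ', hsplit]
    have h2 : ‖(((p ++ [j]).map fun i => A i T).prod * A' k T * Q') Ω‖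
        ≤ cE * (c1 * T ^ (-μ)) + q'.length * (c1 ^ n * CC * T ^ (-(2:ℝ))) := by
      have := lemB A A' Ω hΩ E c1 cE CC μ hc1 hCC k T hT hA hprod hEfix hdΩ hcommT q' (p ++ [j])
        (fun x hx => hq x (List.mem_cons_of_mem _ hx)) (by simp at hlen ⊢; omega)
      simpa using this
    have hb : (0:ℝ) ≤ c1 * T ^ ((3:ℝ)/2) := by positivity
    have hPn : ‖P‖ ≤ (c1 * T ^ ((3:ℝ)/2)) ^ p.length := map_prod_norm_le A _ T hb hA p
    have hQn : ‖Q'‖ ≤ (c1 * T ^ ((3:ℝ)/2)) ^ q'.length := map_prod_norm_le A _ T hb hA q'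
    have hCn : ‖C‖ ≤ CC * T ^ (-(2*(n:ℝ)+2)) := hcommT j (hq j List.mem_cons_self)
    have h3 : ‖(P * C * Q') Ω‖ ≤ c1 ^ n * CC * T ^ (-(2:ℝ)) := by
      have e1 : ‖(P * C * Q') Ω‖ ≤ ‖P‖ * ‖C‖ * ‖Q'‖ := by
        calc ‖(P * C * Q') Ω‖ ≤ ‖P * C * Q'‖ * ‖Ω‖ := ContinuousLinearMap.le_opNorm _ _
          _ = ‖P * C * Q'‖ := by rw [hΩ, mul_one]
          _ ≤ ‖P * C‖ * ‖Q'‖ := norm_mul_le _ _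
          _ ≤ ‖P‖ * ‖C‖ * ‖Q'‖ := by
              apply mul_le_mul_of_nonneg_right (norm_mul_le _ _) (norm_nonneg _)
      refine e1.trans ?_
      have e2 : ‖P‖ * ‖C‖ * ‖Q'‖
          ≤ (c1 * T ^ ((3:ℝ)/2)) ^ p.length * (CC * T ^ (-(2*(n:ℝ)+2)))
            * (c1 * T ^ ((3:ℝ)/2)) ^ q'.length := by
        gcongr <;> first | exact norm_nonneg _ | positivity
      refine e2.trans ?_
      set m := p.length + q'.length with hm
      have hmn : m + 1 ≤ n := by simp at hlen; omega
      have e3 : (c1 * T ^ ((3:ℝ)/2)) ^ p.length * (CC * T ^ (-(2*(n:ℝ)+2)))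
            * (c1 * T ^ ((3:ℝ)/2)) ^ q'.length
          = c1 ^ m * CC * (T ^ ((3:ℝ)/2) ) ^ m * T ^ (-(2*(n:ℝ)+2)) := by
        rw [mul_pow, mul_pow, hm, pow_add, pow_add]; ring
      rw [e3]
      have hpow : (T ^ ((3:ℝ)/2)) ^ m * T ^ (-(2*(n:ℝ)+2)) ≤ T ^ (-(2:ℝ)) := by
        rw [← Real.rpow_natCast (T ^ ((3:ℝ)/2)) m, ← Real.rpow_mul (le_of_lt hT0),
          ← Real.rpow_add hT0]
        apply Real.rpow_le_rpow_of_exponent_le hT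
        have : (m:ℝ) + 1 ≤ n := by exact_mod_cast hmn
        nlinarith
      calc c1 ^ m * CC * (T ^ ((3:ℝ)/2)) ^ m * T ^ (-(2*(n:ℝ)+2))
          = c1 ^ m * CC * ((T ^ ((3:ℝ)/2)) ^ m * T ^ (-(2*(n:ℝ)+2))) := by ring
        _ ≤ c1 ^ n * CC * T ^ (-(2:ℝ)) := by
            have h4 : c1 ^ m ≤ c1 ^ n := pow_le_pow_right₀ hc1 (by omega)
            have h5 : (0:ℝ) ≤ c1 ^ m := by positivity
            calc c1 ^ m * CC * ((T ^ ((3:ℝ)/2)) ^ m * T ^ (-(2*(n:ℝ)+2)))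
                ≤ c1 ^ m * CC * T ^ (-(2:ℝ)) := by
                  apply mul_le_mul_of_nonneg_left hpow (by positivity)
              _ ≤ c1 ^ n * CC * T ^ (-(2:ℝ)) := by
                  apply mul_le_mul_of_nonneg_right
                    (mul_le_mul_of_nonneg_right h4 hCC) (by positivity)
    calc ‖((((p ++ [j]).map fun i => A i T).prod * A' k T * Q') + P * C * Q') Ω‖
        ≤ ‖(((p ++ [j]).map fun i => A i T).prod * A' k T * Q') Ω‖ + ‖(P * C * Q') Ω‖ := by
          rw [ContinuousLinearMap.add_apply]; exact norm_add_le _ _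
      _ ≤ (cE * (c1 * T ^ (-μ)) + q'.length * (c1 ^ n * CC * T ^ (-(2:ℝ))))
            + c1 ^ n * CC * T ^ (-(2:ℝ)) := add_le_add h2 h3
      _ = cE * (c1 * T ^ (-μ)) + ((q'.length : ℝ) + 1) * (c1 ^ n * CC * T ^ (-(2:ℝ))) := by ring
      _ = cE * (c1 * T ^ (-μ)) + (j :: q').length * (c1 ^ n * CC * T ^ (-(2:ℝ))) := by
          simp [List.length_cons]

theorem lemC {n} (A A' : Fin n → ℝ → H →L[ℂ] H) (Ω : H) (hΩ : ‖Ω‖ = 1)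
    (E : H →L[ℂ] H) (c1 cE CC μ : ℝ) (hc1 : 1 ≤ c1) (hcE : 0 ≤ cE) (hCC : 0 ≤ CC)
    (T : ℝ) (hT : 1 ≤ T)
    (hA : ∀ i : Fin n, ‖A i T‖ ≤ c1 * T ^ ((3:ℝ)/2))
    (hprod : ∀ l : List (Fin n), ‖(l.map fun i => A i T).prod * E‖ ≤ cE)
    (hEfix : ∀ k : Fin n, E ((A' k T) Ω) = (A' k T) Ω)
    (hdΩ : ∀ k : Fin n, ‖(A' k T) Ω‖ ≤ c1 * T ^ (-μ))
    (hcommT : ∀ k j : Fin n, k < j →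
      ‖A' k T * A j T - A j T * A' k T‖ ≤ CC * T ^ (-(2*(n:ℝ)+2))) :
    ∀ (l p : List (Fin n)), l.Pairwise (· < ·) → p.length + l.length ≤ n →
      ‖(((p.map fun i => A i T).prod) * Dlist A A' l T) Ω‖
        ≤ l.length * (cE * (c1 * T ^ (-μ)) + n * (c1 ^ n * CC * T ^ (-(2:ℝ))))
  | [], p, _, _ => by simp [Dlist]
  | i :: l', p, hpair, hlen => by
    have hT0 : (0:ℝ) < T := lt_of_lt_of_le one_pos hT
    set P := (p.map fun i => A i T).prod with hP
    have hsplit : P * Dlist A A' (i :: l') T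
        = P * A' i T * ((l'.map fun j => A j T).prod)
          + ((p ++ [i]).map fun j => A j T).prod * Dlist A A' l' T := by
      simp only [Dlist, List.map_append, List.prod_append, List.map_cons, List.prod_cons,
        List.map_nil, List.prod_nil, mul_one]
      rw [mul_add, mul_assoc, mul_assoc]
    rw [hsplit]
    have hpair' := List.pairwise_cons.mp hpair
    have h1 : ‖(P * A' i T * ((l'.map fun j => A j T).prod)) Ω‖
        ≤ cE * (c1 * T ^ (-μ)) + l'.length * (c1 ^ n * CC * T ^ (-(2:ℝ))) :=
      lemB A A' Ω hΩ E c1 cE CC μ hc1 hCC i T hT hA hprod (hEfix i) (hdΩ i) (hcommT i)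
        l' p hpair'.1 (by simp at hlen ⊢; omega)
    have h2 : ‖(((p ++ [i]).map fun j => A j T).prod * Dlist A A' l' T) Ω‖
        ≤ l'.length * (cE * (c1 * T ^ (-μ)) + n * (c1 ^ n * CC * T ^ (-(2:ℝ)))) :=
      lemC A A' Ω hΩ E c1 cE CC μ hc1 hcE hCC T hT hA hprod hEfix hdΩ hcommT l' (p ++ [i])
        hpair'.2 (by simp at hlen ⊢; omega)
    have hln : (l'.length : ℝ) ≤ n := by
      have : l'.length ≤ n := by simp at hlen; omega
      exact_mod_cast this
    have hK : (0:ℝ) ≤ c1 ^ n * CC * T ^ (-(2:ℝ)) := by positivity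
    have ha : (0:ℝ) ≤ cE * (c1 * T ^ (-μ)) := by positivity
    calc ‖((P * A' i T * ((l'.map fun j => A j T).prod))
            + ((p ++ [i]).map fun j => A j T).prod * Dlist A A' l' T) Ω‖
        ≤ ‖(P * A' i T * ((l'.map fun j => A j T).prod)) Ω‖
          + ‖(((p ++ [i]).map fun j => A j T).prod * Dlist A A' l' T) Ω‖ := by
          rw [ContinuousLinearMap.add_apply]; exact norm_add_le _ _
      _ ≤ (cE * (c1 * T ^ (-μ)) + l'.length * (c1 ^ n * CC * T ^ (-(2:ℝ))))
          + l'.length * (cE * (c1 * T ^ (-μ)) + n * (c1 ^ n * CC * T ^ (-(2:ℝ)))) :=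
          add_le_add h1 h2
      _ ≤ ((l'.length : ℝ) + 1) * (cE * (c1 * T ^ (-μ)) + n * (c1 ^ n * CC * T ^ (-(2:ℝ)))) := by
          nlinarith [mul_le_mul_of_nonneg_right hln hK]
      _ = (i :: l').length * (cE * (c1 * T ^ (-μ)) + n * (c1 ^ n * CC * T ^ (-(2:ℝ)))) := by
          push_cast [List.length_cons]; ring
end CookAux

open MeasureTheory Filter in
/-- Abstract existence of asymptotic states (Theorem 2) via Cook's method. -/
theorem stmt_6 {H : Type*} [NormedAddCommGroup H] [InnerProductSpace ℂ H]
    [CompleteSpace H] (n : ℕ) (A A' : Fin n → ℝ → H →L[ℂ] H) (Ω : H)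
    (hΩ : ‖Ω‖ = 1) (c μ : ℝ) (hμ : 1 < μ)
    (hnorm : ∀ (i : Fin n) (T : ℝ), 1 ≤ T → ‖A i T‖ ≤ c * T ^ ((3 : ℝ) / 2))
    (hderiv : ∀ (i : Fin n) (T : ℝ), 1 ≤ T → HasDerivAt (fun s => A i s) (A' i T) T)
    (hcomm : ∀ i j : Fin n, i < j → ∀ N : ℕ, ∃ cN : ℝ, ∀ T : ℝ, 1 ≤ T →
      ‖A' i T * A j T - A j T * A' i T‖ ≤ cN * T ^ (-(N : ℝ)))
    (E : H →L[ℂ] H) (hE : E * E = E)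
    (hprod : ∃ cE : ℝ, ∀ T : ℝ, 1 ≤ T → ∀ l : List (Fin n),
      ‖(l.map fun i => A i T).prod * E‖ ≤ cE)
    (hEfix : ∀ (k : Fin n) (T : ℝ), 1 ≤ T → E ((A' k T) Ω) = (A' k T) Ω)
    (hdΩ : ∀ (k : Fin n) (T : ℝ), 1 ≤ T → ‖(A' k T) Ω‖ ≤ c * T ^ (-μ)) :
    ∃ L : H, Tendsto (fun T => ((List.ofFn fun i => A i T).prod) Ω) atTop (nhds L) := by
  classical
  obtain ⟨cE₀, hprodE⟩ := hprod
  set c1 : ℝ := max c 1 with hc1def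
  have hc1 : 1 ≤ c1 := le_max_right _ _
  have hcc1 : c ≤ c1 := le_max_left _ _
  set cE : ℝ := max cE₀ 0 with hcEdef
  have hcE : 0 ≤ cE := le_max_right _ _
  -- uniform commutator constant
  have hchoice : ∀ i j : Fin n, ∃ cc : ℝ, ∀ T : ℝ, 1 ≤ T → i < j →
      ‖A' i T * A j T - A j T * A' i T‖ ≤ cc * T ^ (-(((2*n+2:ℕ)):ℝ)) := by
    intro i j
    by_cases h : i < j
    · obtain ⟨cN, hcN⟩ := hcomm i j h (2*n+2)
      exact ⟨cN, fun T hT _ => hcN T hT⟩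
    · exact ⟨0, fun T hT h' => absurd h' h⟩
  choose cc hcc using hchoice
  set CC : ℝ := ∑ i : Fin n, ∑ j : Fin n, max (cc i j) 0 with hCCdef
  have hCC : 0 ≤ CC := Finset.sum_nonneg fun i _ => Finset.sum_nonneg fun j _ => le_max_right _ _
  have hccCC : ∀ i j : Fin n, cc i j ≤ CC := by
    intro i j
    have h0 : cc i j ≤ max (cc i j) 0 := le_max_left _ _
    refine h0.trans ?_
    calc max (cc i j) 0 ≤ ∑ j' : Fin n, max (cc i j') 0 :=
          Finset.single_le_sum (f := fun j' => max (cc i j') 0)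
            (fun j' _ => le_max_right _ _) (Finset.mem_univ j)
      _ ≤ CC := Finset.single_le_sum
          (f := fun i' => ∑ j' : Fin n, max (cc i' j') 0)
          (fun i' _ => Finset.sum_nonneg fun j' _ => le_max_right _ _) (Finset.mem_univ i)
  have hCCb : ∀ i j : Fin n, i < j → ∀ T : ℝ, 1 ≤ T →
      ‖A' i T * A j T - A j T * A' i T‖ ≤ CC * T ^ (-(2*(n:ℝ)+2)) := by
    intro i j hij T hT
    have hT0 : (0:ℝ) < T := lt_of_lt_of_le one_pos hT
    have hexp : -(((2*n+2:ℕ)):ℝ) = -(2*(n:ℝ)+2) := by push_cast; ring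
    calc ‖A' i T * A j T - A j T * A' i T‖ ≤ cc i j * T ^ (-(((2*n+2:ℕ)):ℝ)) := hcc i j T hT hij
      _ ≤ CC * T ^ (-(((2*n+2:ℕ)):ℝ)) := by
          apply mul_le_mul_of_nonneg_right (hccCC i j) (le_of_lt (Real.rpow_pos_of_pos hT0 _))
      _ = CC * T ^ (-(2*(n:ℝ)+2)) := by rw [hexp]
  -- adjusted hypotheses
  have hAb : ∀ T : ℝ, 1 ≤ T → ∀ i : Fin n, ‖A i T‖ ≤ c1 * T ^ ((3:ℝ)/2) := by
    intro T hT i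
    have hT0 : (0:ℝ) < T := lt_of_lt_of_le one_pos hT
    exact le_trans (hnorm i T hT)
      (mul_le_mul_of_nonneg_right hcc1 (le_of_lt (Real.rpow_pos_of_pos hT0 _)))
  have hprod' : ∀ T : ℝ, 1 ≤ T → ∀ l : List (Fin n),
      ‖(l.map fun i => A i T).prod * E‖ ≤ cE := fun T hT l =>
    le_trans (hprodE T hT l) (le_max_left _ _)
  have hdΩ' : ∀ (k : Fin n) (T : ℝ), 1 ≤ T → ‖(A' k T) Ω‖ ≤ c1 * T ^ (-μ) := by
    intro k T hT
    have hT0 : (0:ℝ) < T := lt_of_lt_of_le one_pos hT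
    exact le_trans (hdΩ k T hT)
      (mul_le_mul_of_nonneg_right hcc1 (le_of_lt (Real.rpow_pos_of_pos hT0 _)))
  -- the curve and its derivative
  set h : ℝ → H := fun T => ((List.ofFn fun i => A i T).prod) Ω with hhdef
  set g' : ℝ → (H →L[ℂ] H) := fun T => Dlist A A' (List.finRange n) T with hg'def
  set h' : ℝ → H := fun T => g' T Ω with hh'def
  set φ : (H →L[ℂ] H) →L[ℝ] H := ((ContinuousLinearMap.apply ℂ H Ω).restrictScalars ℝ)
    with hφdef
  have hφ : ∀ v : H →L[ℂ] H, φ v = v Ω := fun v => rfl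
  have hfun : h = fun s => φ (((List.finRange n).map fun j => A j s).prod) := by
    funext s
    simp only [hhdef, hφ, List.ofFn_eq_map]
  have hderivh : ∀ T : ℝ, 1 ≤ T → HasDerivAt h (h' T) T := by
    intro T hT
    have hg := listprod_hasDerivAt A A' T (fun i => hderiv i T hT) (List.finRange n)
    have := (φ.hasFDerivAt).comp_hasDerivAt T hg
    rw [hfun]
    exact this
  -- decay exponents and constants
  set ν : ℝ := min μ 2 with hνdef
  have hν1 : 1 < ν := lt_min hμ one_lt_two
  set Cfin : ℝ := n * (cE * c1 + n * (c1 ^ n * CC)) with hCfindef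
  have hbound : ∀ T : ℝ, 1 ≤ T → ‖h' T‖ ≤ Cfin * T ^ (-ν) := by
    intro T hT
    have hT0 : (0:ℝ) < T := lt_of_lt_of_le one_pos hT
    have hlem := lemC A A' Ω hΩ E c1 cE CC μ hc1 hcE hCC T hT (hAb T hT) (hprod' T hT)
      (fun k => hEfix k T hT) (fun k => hdΩ' k T hT) (fun k j hkj => hCCb k j hkj T hT)
      (List.finRange n) [] (List.pairwise_lt_finRange n) (by simp)
    simp only [List.map_nil, List.prod_nil, one_mul, List.length_finRange] at hlem
    have h1 : T ^ (-μ) ≤ T ^ (-ν) :=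
      Real.rpow_le_rpow_of_exponent_le hT (neg_le_neg (min_le_left _ _))
    have h2 : T ^ (-(2:ℝ)) ≤ T ^ (-ν) :=
      Real.rpow_le_rpow_of_exponent_le hT (neg_le_neg (min_le_right _ _))
    refine le_trans hlem ?_
    have hc10 : (0:ℝ) ≤ c1 := le_trans zero_le_one hc1
    calc (n:ℝ) * (cE * (c1 * T ^ (-μ)) + n * (c1 ^ n * CC * T ^ (-(2:ℝ))))
        ≤ (n:ℝ) * (cE * (c1 * T ^ (-ν)) + n * (c1 ^ n * CC * T ^ (-ν))) := by gcongr
      _ = Cfin * T ^ (-ν) := by rw [hCfindef]; ring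
  -- measurability
  haveI : SecondCountableTopologyEither ℝ (H →L[ℂ] H) :=
    secondCountableTopologyEither_of_left ℝ _
  have hAm : ∀ i, AEStronglyMeasurable (fun T => A i T) (volume.restrict (Set.Ioi 1)) := by
    intro i
    apply ContinuousOn.aestronglyMeasurable _ measurableSet_Ioi
    intro x hx
    exact (hderiv i x (le_of_lt hx)).continuousAt.continuousWithinAt
  have hA'm : ∀ i, AEStronglyMeasurable (fun T => A' i T) (volume.restrict (Set.Ioi 1)) := by
    intro i
    refine (stronglyMeasurable_deriv (fun s => A i s)).aestronglyMeasurable.congr ?_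
    rw [EventuallyEq, ae_restrict_iff' measurableSet_Ioi]
    exact ae_of_all _ fun T hT => (hderiv i T (le_of_lt hT)).deriv
  have h'm : AEStronglyMeasurable h' (volume.restrict (Set.Ioi 1)) := by
    have := Dlist_aesm A A' (volume.restrict (Set.Ioi 1)) hAm hA'm (List.finRange n)
    exact φ.continuous.comp_aestronglyMeasurable this
  -- integrability
  have hint : IntegrableOn h' (Set.Ioi 1) := by
    refine Integrable.mono'
      ((integrableOn_Ioi_rpow_of_lt (by linarith : -ν < -1) one_pos).const_mul Cfin) h'm ?_
    rw [ae_restrict_iff' measurableSet_Ioi]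
    exact ae_of_all _ fun T hT => hbound T (le_of_lt hT)
  -- fundamental theorem of calculus
  have hFTC : ∀ b : ℝ, 1 ≤ b → ∫ t in (1:ℝ)..b, h' t = h b - h 1 := by
    intro b hb
    apply intervalIntegral.integral_eq_sub_of_hasDerivAt
    · intro x hx
      rw [Set.uIcc_of_le hb] at hx
      exact hderivh x hx.1
    · rw [intervalIntegrable_iff_integrableOn_Ioc_of_le hb]
      exact hint.mono_set Set.Ioc_subset_Ioi_self
  refine ⟨h 1 + ∫ t in Set.Ioi 1, h' t, ?_⟩
  have hlim : Tendsto (fun b => h 1 + ∫ t in (1:ℝ)..b, h' t) atTop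
      (nhds (h 1 + ∫ t in Set.Ioi 1, h' t)) :=
    tendsto_const_nhds.add (intervalIntegral_tendsto_integral_Ioi 1 hint tendsto_id)
  refine hlim.congr' ?_
  filter_upwards [eventually_ge_atTop (1:ℝ)] with b hb
  rw [hFTC b hb]
  abel
end

section
/- Let V₁, V₂ ⊂ ℝ³ be compact disjoint sets and Γᵢ = {(1, v) : v ∈ Vᵢ}. Let K₁, K₂ ⊂ ℝ⁴ be compact with Kᵢ ⊂ ℝ⁴. Then there exist δ > 0 and T₀ such that for all T ≥ T₀, the sets K₁ + T·Γ₁^δ and K₂ + T·Γ₂^δ are spacelike separated, where Γᵢ^δ denotes the closed δ-neighborhood of Γᵢ and T·S = {T s : s ∈ S}; spacelike separation means (x−y)·(x−y) < 0 in the Minkowski metric (+,−,−,−) for all x in one set and y in the other. -/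
/-!
Write `m z = ‖z.2‖ - |z.1|` for `z ∈ ℝ × E`, so that `z` is spacelike iff `m z > 0`. The function `m`
is 2-Lipschitz (for the sup norm on `ℝ × E`) and positively homogeneous. Differences of points of the
cones `{1} × V₁` and `{1} × V₂` have margin at least `d = dist(V₁, V₂) > 0`, so differences of points
of their `d/8`-thickenings have margin at least `d/2`. Hence `m (k + T • s) ≥ T d / 2 - 2‖k‖`, and
the bounded displacement `k ∈ K₁ - K₂` is swamped once `T` is large.
-/

open Metric Pointwise

theorem exists_pos_forall_le_dist_of_disjoint {α : Type*} [PseudoMetricSpace α] {s t : Set α}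
    (hs : IsCompact s) (ht : IsClosed t) (hst : Disjoint s t) :
    ∃ d : ℝ, 0 < d ∧ ∀ x ∈ s, ∀ y ∈ t, d ≤ dist x y := by
  obtain ⟨r, hr, hsep⟩ := exists_pos_forall_lt_edist hs ht hst
  refine ⟨r, hr, fun x hx y hy => ?_⟩
  have := hsep x hx y hy
  rw [edist_dist, ← ENNReal.ofReal_coe_nnreal] at this
  exact (ENNReal.ofReal_lt_ofReal_iff'.1 this).1.le

section SpacelikeMargin

variable {E : Type*} [SeminormedAddCommGroup E]

def spacelikeMargin (z : ℝ × E) : ℝ := ‖z.2‖ - |z.1|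

theorem spacelikeMargin_le_add (z w : ℝ × E) :
    spacelikeMargin w ≤ spacelikeMargin z + 2 * ‖z - w‖ := by
  have h₁ : |z.1| - |w.1| ≤ ‖z - w‖ := (abs_sub_abs_le_abs_sub z.1 w.1).trans (norm_fst_le (z - w))
  have h₂ : ‖w.2‖ - ‖z.2‖ ≤ ‖z - w‖ :=
    (norm_sub_norm_le w.2 z.2).trans ((norm_sub_rev _ _).trans_le (norm_snd_le (z - w)))
  unfold spacelikeMargin
  linarith

theorem spacelikeMargin_smul [NormedSpace ℝ E] {T : ℝ} (hT : 0 ≤ T) (z : ℝ × E) :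
    spacelikeMargin (T • z) = T * spacelikeMargin z := by
  simp only [spacelikeMargin, Prod.smul_fst, Prod.smul_snd, smul_eq_mul, norm_smul, abs_mul,
    Real.norm_eq_abs, abs_of_nonneg hT]
  ring

theorem spacelikeMargin_add_smul [NormedSpace ℝ E] {T : ℝ} (hT : 0 ≤ T) (k s : ℝ × E) :
    T * spacelikeMargin s - 2 * ‖k‖ ≤ spacelikeMargin (k + T • s) := by
  have := spacelikeMargin_le_add (k + T • s) (T • s)
  rw [spacelikeMargin_smul hT, add_sub_cancel_right] at this
  linarith

theorem sq_fst_sub_sq_norm_snd_neg {z : ℝ × E} (hz : 0 < spacelikeMargin z) :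
    z.1 ^ 2 - ‖z.2‖ ^ 2 < 0 := by
  have : |z.1| < |‖z.2‖| := by
    rw [abs_norm]
    exact sub_pos.1 hz
  linarith [sq_lt_sq.2 this]

theorem spacelikeMargin_graph_sub_graph (c : ℝ) (v₁ v₂ : E) :
    spacelikeMargin ((c, v₁) - (c, v₂)) = dist v₁ v₂ := by
  simp [spacelikeMargin, dist_eq_norm]

theorem le_spacelikeMargin_sub_of_mem_cthickening {Γ₁ Γ₂ : Set (ℝ × E)}
    (h₁ : IsCompact Γ₁) (h₂ : IsCompact Γ₂) {ε δ : ℝ} (hδ : 0 ≤ δ)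
    (hΓ : ∀ γ₁ ∈ Γ₁, ∀ γ₂ ∈ Γ₂, ε ≤ spacelikeMargin (γ₁ - γ₂))
    {g₁ g₂ : ℝ × E} (hg₁ : g₁ ∈ cthickening δ Γ₁) (hg₂ : g₂ ∈ cthickening δ Γ₂) :
    ε - 4 * δ ≤ spacelikeMargin (g₁ - g₂) := by
  rw [h₁.cthickening_eq_biUnion_closedBall hδ, Set.mem_iUnion₂] at hg₁
  rw [h₂.cthickening_eq_biUnion_closedBall hδ, Set.mem_iUnion₂] at hg₂
  obtain ⟨γ₁, hγ₁, hd₁⟩ := hg₁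
  obtain ⟨γ₂, hγ₂, hd₂⟩ := hg₂
  rw [mem_closedBall, dist_eq_norm] at hd₁ hd₂
  have hclose : ‖(g₁ - g₂) - (γ₁ - γ₂)‖ ≤ 2 * δ := by
    rw [sub_sub_sub_comm]
    linarith [norm_sub_le (g₁ - γ₁) (g₂ - γ₂)]
  linarith [hΓ γ₁ hγ₁ γ₂ hγ₂, spacelikeMargin_le_add (g₁ - g₂) (γ₁ - γ₂)]

end SpacelikeMargin

/-- Geometric fact behind Lemma 2(a): compact regions carried along
thickened cones over disjoint compact velocity sets become spacelike
separated (in the Minkowski metric `(+,-,-,-)`) for large times. -/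
theorem stmt_10 (V₁ V₂ : Set (EuclideanSpace ℝ (Fin 3)))
    (hV₁ : IsCompact V₁) (hV₂ : IsCompact V₂) (hdisj : Disjoint V₁ V₂)
    (K₁ K₂ : Set (ℝ × EuclideanSpace ℝ (Fin 3)))
    (hK₁ : IsCompact K₁) (hK₂ : IsCompact K₂) :
    ∃ δ : ℝ, 0 < δ ∧ ∃ T₀ : ℝ, ∀ T : ℝ, T₀ ≤ T →
      ∀ x ∈ K₁ + T • Metric.cthickening δ ((fun v => ((1 : ℝ), v)) '' V₁),
      ∀ y ∈ K₂ + T • Metric.cthickening δ ((fun v => ((1 : ℝ), v)) '' V₂),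
        (x.1 - y.1) ^ 2 - ‖x.2 - y.2‖ ^ 2 < 0 := by
  obtain ⟨d, hd, hsep⟩ := exists_pos_forall_le_dist_of_disjoint hV₁ hV₂.isClosed hdisj
  obtain ⟨C, hC⟩ := isBounded_iff_forall_norm_le.1 (hK₁.isBounded.sub hK₂.isBounded)
  have hΓ : ∀ γ₁ ∈ (fun v => ((1 : ℝ), v)) '' V₁, ∀ γ₂ ∈ (fun v => ((1 : ℝ), v)) '' V₂,
      d ≤ spacelikeMargin (γ₁ - γ₂) := by
    rintro _ ⟨v₁, hv₁, rfl⟩ _ ⟨v₂, hv₂, rfl⟩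
    rw [spacelikeMargin_graph_sub_graph]
    exact hsep v₁ hv₁ v₂ hv₂
  have hgraph (V : Set (EuclideanSpace ℝ (Fin 3))) (hV : IsCompact V) :
      IsCompact ((fun v => ((1 : ℝ), v)) '' V) :=
    hV.image (continuous_const.prodMk continuous_id)
  refine ⟨d / 8, by positivity, (4 * C + 1) / d, fun T hT => ?_⟩
  rintro _ ⟨k₁, hk₁, _, ⟨g₁, hg₁, rfl⟩, rfl⟩ _ ⟨k₂, hk₂, _, ⟨g₂, hg₂, rfl⟩, rfl⟩
  have hk : ‖k₁ - k₂‖ ≤ C := hC _ (Set.sub_mem_sub hk₁ hk₂)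
  have hTd : 4 * C + 1 ≤ T * d := (div_le_iff₀ hd).1 hT
  have hT0 : 0 ≤ T := by nlinarith [norm_nonneg (k₁ - k₂)]
  have hg := le_spacelikeMargin_sub_of_mem_cthickening (hgraph V₁ hV₁) (hgraph V₂ hV₂)
    (by positivity) hΓ hg₁ hg₂
  have hxy : k₁ + T • g₁ - (k₂ + T • g₂) = (k₁ - k₂) + T • (g₁ - g₂) := by
    rw [smul_sub]; abel
  have hmargin := spacelikeMargin_add_smul hT0 (k₁ - k₂) (g₁ - g₂)
  rw [← hxy] at hmargin
  exact sq_fst_sub_sq_norm_snd_neg (by nlinarith)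
end
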